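/- Let α ∈ Sⁿ, let r_α be any element of G preserving ℝ^{n+1}×{0} with r_α(α,1) = e₁, let (p,q) ∈ ℤ^{n+1} × ℕ with p/q ∈ Sⁿ, and let δ > 0. If for some t > 0 one has ‖g_t r_α(p,q)‖ < δ, then there exists a real N > q such that ‖α − p/q‖ < 2δ/√(qN). -/

import Mathlib

open MeasureTheory

/-- The unit Euclidean sphere `Sⁿ` in `ℝ^{n+1}` (the ambient space `Fin (n+1) → ℝ`
carries the supremum norm). -/
noncomputable def unitSphere (n : ℕ) : Set (Fin (n + 1) → ℝ) :=
  {x | ∑ i, x i ^ 2 = 1}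

/-- The rational point `p/q` in `ℝ^{n+1}`. -/
noncomputable def ratPt (n : ℕ) (p : Fin (n + 1) → ℤ) (q : ℕ) : Fin (n + 1) → ℝ :=
  fun i => (p i : ℝ) / (q : ℝ)

/-- The quadratic form `Q(x) = x₁² + ⋯ + x_{n+1}² − x_{n+2}²` on `ℝ^{n+2}`. -/
noncomputable def Qform (n : ℕ) (x : Fin (n + 2) → ℝ) : ℝ :=
  (∑ i : Fin (n + 1), x i.castSucc ^ 2) - x (Fin.last (n + 1)) ^ 2

/-- `Λ₀ = ℤ^{n+2} ∩ L`, the integer points of the light cone `L = {Q = 0}`. -/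
noncomputable def Lambda0 (n : ℕ) : Set (Fin (n + 2) → ℝ) :=
  {v | (∀ i, ∃ m : ℤ, v i = (m : ℝ)) ∧ Qform n v = 0}

/-- Membership in `G = SO(Q)`: determinant one and preservation of `Q`. -/
def isSOQ (n : ℕ) (g : Matrix (Fin (n + 2)) (Fin (n + 2)) ℝ) : Prop :=
  g.det = 1 ∧ ∀ x, Qform n (g.mulVec x) = Qform n x

/-- The one-parameter diagonal flow `g_t`. -/
noncomputable def gFlow (n : ℕ) (t : ℝ) : Matrix (Fin (n + 2)) (Fin (n + 2)) ℝ :=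
  Matrix.of fun i j =>
    if i = 0 ∧ j = 0 then Real.cosh t
    else if i = 0 ∧ j = Fin.last (n + 1) then -Real.sinh t
    else if i = Fin.last (n + 1) ∧ j = 0 then -Real.sinh t
    else if i = Fin.last (n + 1) ∧ j = Fin.last (n + 1) then Real.cosh t
    else if i = j then 1 else 0

/-- The vector `e₁ = (1,0,…,0,1) ∈ L`. -/
noncomputable def eOne (n : ℕ) : Fin (n + 2) → ℝ :=
  fun i => if i = 0 then 1 else if i = Fin.last (n + 1) then 1 else 0

/-- The embedding `α ↦ (α,1)` of `Sⁿ` into the light cone. -/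
noncomputable def embedS (n : ℕ) (α : Fin (n + 1) → ℝ) : Fin (n + 2) → ℝ :=
  Fin.snoc α 1

/-- The vector `(p,q) ∈ ℝ^{n+2}` with first `n+1` coordinates `p` and last coordinate `q`. -/
noncomputable def vecPQ (n : ℕ) (p : Fin (n + 1) → ℤ) (q : ℕ) : Fin (n + 2) → ℝ :=
  Fin.snoc (fun i => (p i : ℝ)) (q : ℝ)

/-- `g` preserves the subspace `ℝ^{n+1} × {0}`. -/
def preservesHyperplane (n : ℕ) (g : Matrix (Fin (n + 2)) (Fin (n + 2)) ℝ) : Prop :=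
  ∀ x : Fin (n + 2) → ℝ, x (Fin.last (n + 1)) = 0 → g.mulVec x (Fin.last (n + 1)) = 0

/-- `ω(Λ)`: the infimum of the (sup) norms of the nonzero vectors of `Λ`. -/
noncomputable def omegaMin (n : ℕ) (Λ : Set (Fin (n + 2) → ℝ)) : ℝ :=
  sInf ((fun v => ‖v‖) '' {v | v ∈ Λ ∧ v ≠ 0})

/-- The lattice `g Λ₀`. -/
noncomputable def latticeOf (n : ℕ) (g : Matrix (Fin (n + 2)) (Fin (n + 2)) ℝ) :
    Set (Fin (n + 2) → ℝ) :=
  (fun v => g.mulVec v) '' Lambda0 n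

/-! Put `v = r_α (p,q)`. As `r_α` preserves `ℝ^{n+1} × {0}` and maps `(α,1)` to `e₁`, the last
coordinate of `v` is `q`, and `r_α` carries `(p,q) - q (α,1) = (p - qα, 0)` to `v - q e₁`. Comparing
`Q` on both sides, with `(p,q)` and `e₁` isotropic, gives `|p - qα|² = 2q (q - v₀)`, so `v₀ ≤ q`.
The flow `g_t` acts on the coordinates `(v₀, q)` by a hyperbolic rotation; both images being
smaller than `δ` forces `q < δ eᵗ` (using `v₀ ≤ q` and `t > 0`) and `(q - v₀) eᵗ < 2δ`. Any
`N ∈ (q, δ eᵗ)` then works: `‖α - p/q‖² ≤ |p - qα|² / q² = 2 (q - v₀) / q` and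
`(q - v₀) N < 2δ²`. -/

open Matrix Real

lemma Qform_snoc (n : ℕ) (x : Fin (n + 1) → ℝ) (c : ℝ) :
    Qform n (Fin.snoc x c) = ∑ i, x i ^ 2 - c ^ 2 := by
  simp [Qform]

lemma eOne_zero (n : ℕ) : eOne n 0 = 1 := if_pos rfl

lemma eOne_last (n : ℕ) : eOne n (Fin.last (n + 1)) = 1 := by
  simp [eOne]

lemma eOne_castSucc_succ (n : ℕ) (i : Fin n) : eOne n i.succ.castSucc = 0 := by
  simp [eOne, Fin.ext_iff, i.isLt.ne]

lemma Qform_sub_smul_eOne (n : ℕ) (v : Fin (n + 2) → ℝ) (c : ℝ) :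
    Qform n (v - c • eOne n) = Qform n v - 2 * c * (v 0 - v (Fin.last (n + 1))) := by
  simp only [Qform, Fin.sum_univ_succ, Pi.sub_apply, Pi.smul_apply, smul_eq_mul,
    Fin.castSucc_zero, eOne_zero, eOne_last, eOne_castSucc_succ, mul_zero, sub_zero]
  ring

lemma gFlow_mulVec_zero (n : ℕ) (t : ℝ) (v : Fin (n + 2) → ℝ) :
    (gFlow n t *ᵥ v) 0 = cosh t * v 0 - sinh t * v (Fin.last (n + 1)) := by
  rw [mulVec, dotProduct, Finset.sum_eq_add _ _ (Fin.last_pos'.ne)]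
  · simp [gFlow, Fin.last_pos'.ne']
    ring
  · rintro j - ⟨h0, hl⟩
    simp [gFlow, h0, hl, Ne.symm h0]
  all_goals simp

lemma gFlow_mulVec_last (n : ℕ) (t : ℝ) (v : Fin (n + 2) → ℝ) :
    (gFlow n t *ᵥ v) (Fin.last (n + 1)) = cosh t * v (Fin.last (n + 1)) - sinh t * v 0 := by
  rw [mulVec, dotProduct, Finset.sum_eq_add _ _ (Fin.last_pos'.ne)]
  · simp [gFlow, Fin.last_pos'.ne, Fin.last_pos'.ne']
    ring
  · rintro j - ⟨h0, hl⟩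
    simp [gFlow, h0, hl, Ne.symm hl, Fin.last_pos'.ne']
  all_goals simp

section Normalization

variable {n : ℕ} {g : Matrix (Fin (n + 2)) (Fin (n + 2)) ℝ} {α : Fin (n + 1) → ℝ}

lemma mulVec_last_of_mulVec_embedS_eq_eOne (hP : preservesHyperplane n g)
    (hα : g *ᵥ embedS n α = eOne n) (w : Fin (n + 2) → ℝ) :
    (g *ᵥ w) (Fin.last (n + 1)) = w (Fin.last (n + 1)) := by
  have h := hP (w - w (Fin.last (n + 1)) • embedS n α) (by simp [embedS])
  rw [mulVec_sub, mulVec_smul, hα] at h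
  simpa [eOne_last, sub_eq_zero] using h

lemma Qform_sub_smul_embedS (hQ : ∀ x, Qform n (g *ᵥ x) = Qform n x)
    (hP : preservesHyperplane n g) (hα : g *ᵥ embedS n α = eOne n) (w : Fin (n + 2) → ℝ) :
    Qform n (w - w (Fin.last (n + 1)) • embedS n α)
      = Qform n w - 2 * w (Fin.last (n + 1)) * ((g *ᵥ w) 0 - w (Fin.last (n + 1))) := by
  rw [← hQ, mulVec_sub, mulVec_smul, hα, Qform_sub_smul_eOne, hQ,
    mulVec_last_of_mulVec_embedS_eq_eOne hP hα]

end Normalization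

lemma sq_norm_le_sum_sq {m : ℕ} (x : Fin m → ℝ) : ‖x‖ ^ 2 ≤ ∑ i, x i ^ 2 := by
  have hS : 0 ≤ ∑ i, x i ^ 2 := by positivity
  have : ‖x‖ ≤ √(∑ i, x i ^ 2) := (pi_norm_le_iff_of_nonneg (sqrt_nonneg _)).2 fun i => by
    rw [norm_eq_abs, ← sqrt_sq_eq_abs]
    exact sqrt_le_sqrt (Finset.single_le_sum (fun j _ => sq_nonneg (x j)) (Finset.mem_univ i))
  calc ‖x‖ ^ 2 ≤ √(∑ i, x i ^ 2) ^ 2 := by gcongr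
    _ = ∑ i, x i ^ 2 := sq_sqrt hS

section RationalPoints

variable {n : ℕ} {p : Fin (n + 1) → ℤ} {q : ℕ}

lemma pos_of_ratPt_mem_unitSphere (h : ratPt n p q ∈ unitSphere n) : 0 < q := by
  refine Nat.pos_of_ne_zero fun hq => ?_
  simp [unitSphere, ratPt, hq] at h

lemma Qform_vecPQ_eq_zero_of_ratPt_mem_unitSphere (h : ratPt n p q ∈ unitSphere n) :
    Qform n (vecPQ n p q) = 0 := by
  have hq : (q : ℝ) ≠ 0 := by exact_mod_cast (pos_of_ratPt_mem_unitSphere h).ne'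
  simp only [unitSphere, ratPt, Set.mem_ofPred_eq, div_pow, ← Finset.sum_div,
    div_eq_one_iff_eq (pow_ne_zero 2 hq)] at h
  simp [vecPQ, Qform_snoc, h]

lemma vecPQ_sub_smul_embedS (α : Fin (n + 1) → ℝ) :
    vecPQ n p q - (q : ℝ) • embedS n α = Fin.snoc (fun i => p i - q * α i) 0 := by
  ext j
  induction j using Fin.lastCases <;> simp [vecPQ, embedS]

lemma norm_sub_ratPt_sq_le (hq : 0 < q) (α : Fin (n + 1) → ℝ) :
    ‖α - ratPt n p q‖ ^ 2 ≤ (∑ i, ((p i : ℝ) - q * α i) ^ 2) / (q : ℝ) ^ 2 := by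
  have hq : (q : ℝ) ≠ 0 := by exact_mod_cast hq.ne'
  convert sq_norm_le_sum_sq (α - ratPt n p q) using 1
  rw [Finset.sum_div]
  congr 1 with i
  simp only [Pi.sub_apply, ratPt]
  field_simp
  ring

lemma sum_sq_sub_mul_eq_of_mulVec_embedS_eq_eOne {g : Matrix (Fin (n + 2)) (Fin (n + 2)) ℝ}
    {α : Fin (n + 1) → ℝ} (hQ : ∀ x, Qform n (g *ᵥ x) = Qform n x)
    (hP : preservesHyperplane n g) (hα : g *ᵥ embedS n α = eOne n)
    (h : ratPt n p q ∈ unitSphere n) :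
    ∑ i, ((p i : ℝ) - q * α i) ^ 2 = 2 * q * (q - (g *ᵥ vecPQ n p q) 0) := by
  have := Qform_sub_smul_embedS hQ hP hα (vecPQ n p q)
  simp only [vecPQ, Fin.snoc_last] at this
  rw [← vecPQ, vecPQ_sub_smul_embedS, Qform_snoc,
    Qform_vecPQ_eq_zero_of_ratPt_mem_unitSphere h] at this
  linarith

end RationalPoints

lemma lt_mul_exp_of_abs_lt {a q t δ : ℝ} (ht : 0 ≤ t) (haq : a ≤ q)
    (h : |cosh t * q - sinh t * a| < δ) : q < δ * exp t := by
  have : q * exp (-t) < δ := by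
    calc q * exp (-t) = cosh t * q - sinh t * q := by rw [← cosh_sub_sinh]; ring
      _ ≤ cosh t * q - sinh t * a := by nlinarith [sinh_nonneg_iff.mpr ht]
      _ < δ := (le_abs_self _).trans_lt h
  rwa [exp_neg, ← div_eq_mul_inv, div_lt_iff₀ (exp_pos t)] at this

lemma sub_mul_exp_lt {a q t δ : ℝ} (h₀ : |cosh t * a - sinh t * q| < δ)
    (h₁ : |cosh t * q - sinh t * a| < δ) : (q - a) * exp t < 2 * δ := by
  have : (q - a) * exp t = (cosh t * q - sinh t * a) - (cosh t * a - sinh t * q) := by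
    rw [← cosh_add_sinh]; ring
  linarith [abs_lt.mp h₀, abs_lt.mp h₁]

lemma two_mul_sub_div_lt_sq {q a N δ T : ℝ} (hq : 0 < q) (hδ : 0 < δ) (haq : a ≤ q)
    (hqN : q < N) (hNT : N ≤ δ * T) (hT : (q - a) * T < 2 * δ) :
    2 * (q - a) / q < (2 * δ / √(q * N)) ^ 2 := by
  have : (q - a) * N < 2 * δ ^ 2 := by
    calc (q - a) * N ≤ (q - a) * (δ * T) := by gcongr
      _ = δ * ((q - a) * T) := by ring
      _ < δ * (2 * δ) := mul_lt_mul_of_pos_left hT hδ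
      _ = 2 * δ ^ 2 := by ring
  rw [div_pow, sq_sqrt (by nlinarith), div_lt_div_iff₀ hq (by nlinarith)]
  nlinarith

theorem close_vector_general (n : ℕ) (α : Fin (n + 1) → ℝ)
    (rα : Matrix (Fin (n + 2)) (Fin (n + 2)) ℝ) (hrG : isSOQ n rα)
    (hrP : preservesHyperplane n rα) (hrα : rα.mulVec (embedS n α) = eOne n)
    (p : Fin (n + 1) → ℤ) (q : ℕ) (hpq : ratPt n p q ∈ unitSphere n)
    (δ : ℝ) (t : ℝ) (ht : 0 < t)
    (hsmall : ‖(gFlow n t * rα).mulVec (vecPQ n p q)‖ < δ) :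
    ∃ N : ℝ, (q : ℝ) < N ∧
      ‖α - ratPt n p q‖ < 2 * δ / Real.sqrt ((q : ℝ) * N) := by
  have hq : (0 : ℝ) < q := by exact_mod_cast pos_of_ratPt_mem_unitSphere hpq
  have hδ : 0 < δ := (norm_nonneg _).trans_lt hsmall
  have hkey := sum_sq_sub_mul_eq_of_mulVec_embedS_eq_eOne hrG.2 hrP hrα hpq
  set v := rα *ᵥ vecPQ n p q
  have hvlast : v (Fin.last (n + 1)) = q := by
    simp [v, mulVec_last_of_mulVec_embedS_eq_eOne hrP hrα, vecPQ]
  have hv0 : v 0 ≤ q := by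
    have : 0 ≤ ∑ i, ((p i : ℝ) - q * α i) ^ 2 := by positivity
    nlinarith
  rw [← mulVec_mulVec] at hsmall
  have hcoord (i : Fin (n + 2)) : |(gFlow n t *ᵥ v) i| < δ := (norm_le_pi_norm _ i).trans_lt hsmall
  have h₀ := hcoord 0
  have h₁ := hcoord (Fin.last (n + 1))
  rw [gFlow_mulVec_zero, hvlast] at h₀
  rw [gFlow_mulVec_last, hvlast] at h₁
  have hqT := lt_mul_exp_of_abs_lt ht.le hv0 h₁
  refine ⟨(q + δ * exp t) / 2, by linarith, lt_of_pow_lt_pow_left₀ 2 (by positivity) ?_⟩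
  calc ‖α - ratPt n p q‖ ^ 2 ≤ (∑ i, ((p i : ℝ) - q * α i) ^ 2) / (q : ℝ) ^ 2 :=
        norm_sub_ratPt_sq_le (pos_of_ratPt_mem_unitSphere hpq) α
    _ = 2 * (q - v 0) / q := by rw [hkey]; field_simp
    _ < _ := two_mul_sub_div_lt_sq hq hδ hv0
        (by linarith) (by linarith) (sub_mul_exp_lt h₀ h₁)

/-- Lemma (close vector): if `‖g_t r_α (p,q)‖ < δ` for some `t > 0`, then there exists a
real `N > q` with `‖α − p/q‖ < 2δ/√(qN)`. -/
theorem close_vector (n : ℕ) (hn : 1 ≤ n) (α : Fin (n + 1) → ℝ) (hα : α ∈ unitSphere n)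
    (rα : Matrix (Fin (n + 2)) (Fin (n + 2)) ℝ) (hrG : isSOQ n rα)
    (hrP : preservesHyperplane n rα) (hrα : rα.mulVec (embedS n α) = eOne n)
    (p : Fin (n + 1) → ℤ) (q : ℕ) (hq : 0 < q) (hpq : ratPt n p q ∈ unitSphere n)
    (δ : ℝ) (hδ : 0 < δ) (t : ℝ) (ht : 0 < t)
    (hsmall : ‖(gFlow n t * rα).mulVec (vecPQ n p q)‖ < δ) :
    ∃ N : ℝ, (q : ℝ) < N ∧
      ‖α - ratPt n p q‖ < 2 * δ / Real.sqrt ((q : ℝ) * N) :=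
  close_vector_general n α rα hrG hrP hrα p q hpq δ t ht hsmall
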